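/- arXiv:2509.00871 — 4 statements merged into one kernel-verified Lean document; each statement's English description precedes it below -/
import Mathlib

section
/- Let u ∈ V be a nonzero vector and let H_u = {x ∈ V : ⟨u,x⟩ = 0}. (1) If Q(u) = 0, then every x ∈ H_u with Q(x) = 0 is a scalar multiple of u. (2) If Q(u) > 0, then H_u = Span{v, v'} for some two linearly independent vectors v, v' with Q(v) = Q(v') = 0. (3) If Q(u) < 0, then every nonzero x ∈ H_u satisfies Q(x) > 0. -/
open scoped NNReal

noncomputable section

/-- The ambient vector space `V = ℝ³`. -/
abbrev V : Type := Fin 3 → ℝ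

/-- The symmetric bilinear form with `⟨αᵢ,αⱼ⟩ = 1` if `i = j` and `-1` otherwise. -/
def B (x y : V) : ℝ := 2 * (∑ i, x i * y i) - (∑ i, x i) * (∑ i, y i)

/-- The associated quadratic form. -/
def Q (x : V) : ℝ := B x x

/-- The simple roots `α₁, α₂, α₃` (the standard basis vectors). -/
def α (i : Fin 3) : V := Pi.single i 1

/-- The set of simple roots. -/
def Δ : Set V := Set.range α

/-- `f` is the reflection `r_{αᵢ} : x ↦ x - 2⟨αᵢ,x⟩αᵢ` for some `i` (note `⟨αᵢ,αᵢ⟩ = 1`). -/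
def IsSimpleReflection (f : V ≃ₗ[ℝ] V) : Prop :=
  ∃ i : Fin 3, ∀ x : V, f x = x - (2 * B (α i) x) • α i

/-- The group `W ≤ GL(V)` generated by the three simple reflections:
the standard reflection representation of `U₃`. -/
def W : Subgroup (V ≃ₗ[ℝ] V) := Subgroup.closure {f | IsSimpleReflection f}

/-- The root system `Φ = {w·αᵢ : w ∈ W, i ∈ {1,2,3}}`. -/
def Φ : Set V := {x | ∃ w ∈ W, ∃ i : Fin 3, x = w (α i)}

/-- `Span_{≥0}(X)`: the set of nonnegative linear combinations of elements of `X`. -/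
def nnspan (X : Set V) : Set V := (Submodule.span ℝ≥0 X : Set V)

/-- The positive roots `Φ⁺ = Φ ∩ Span_{≥0}(Δ)`. -/
def Φpos : Set V := Φ ∩ nnspan Δ

/-- `R ⊆ Φ⁺` is closed if for all `a, b ∈ R`, `Span_{≥0}{a,b} ∩ Φ⁺ ⊆ R`. -/
def IsClosedSet (R : Set V) : Prop := ∀ a ∈ R, ∀ b ∈ R, nnspan {a, b} ∩ Φpos ⊆ R

/-- `R` is a biclosed subset of `Φ⁺`. -/
def IsBiclosed (R : Set V) : Prop := R ⊆ Φpos ∧ IsClosedSet R ∧ IsClosedSet (Φpos \ R)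

open Module

/-!
In the coordinates `a = x₀ - x₁ - x₂`, `b = x₁ - x₂`, `c = x₁ + x₂` (`ofMinkowski` inverts this
change of coordinates, `timeCoord` is `c`) the form is `a² + b² - c²`, positive definite on the
plane `c = 0`. For `x ⊥ u` the vector `c(u) x - c(x) u` lies in that plane and its square is
`c(u)² Q(x) + c(x)² Q(u)`; this settles the null and the timelike case. In the spacelike case `u^⊥`
contains two null vectors with nonzero pairing; these are linearly independent, hence span the
plane `u^⊥`.
-/

lemma B_comm (x y : V) : B x y = B y x := by
  simp only [B, Fin.sum_univ_three]; ring

def Bₗ : LinearMap.BilinForm ℝ V :=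
  LinearMap.mk₂ ℝ B
    (fun x y z => by simp only [B, Fin.sum_univ_three, Pi.add_apply]; ring)
    (fun c x y => by simp only [B, Fin.sum_univ_three, Pi.smul_apply, smul_eq_mul]; ring)
    (fun x y z => by simp only [B, Fin.sum_univ_three, Pi.add_apply]; ring)
    (fun c x y => by simp only [B, Fin.sum_univ_three, Pi.smul_apply, smul_eq_mul]; ring)

@[simp]
lemma Bₗ_apply (x y : V) : Bₗ x y = B x y := rfl

lemma Q_smul_sub_smul (a b : ℝ) (x y : V) :
    Q (a • x - b • y) = a ^ 2 * Q x - 2 * a * b * B x y + b ^ 2 * Q y := by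
  simp only [Q, B, Fin.sum_univ_three, Pi.sub_apply, Pi.smul_apply, smul_eq_mul]; ring

def timeCoord (x : V) : ℝ := x 1 + x 2

lemma timeCoord_smul_sub_smul (a b : ℝ) (x y : V) :
    timeCoord (a • x - b • y) = a * timeCoord x - b * timeCoord y := by
  simp only [timeCoord, Pi.sub_apply, Pi.smul_apply, smul_eq_mul]; ring

lemma Q_pos_of_timeCoord_eq_zero {x : V} (h : timeCoord x = 0) (hx : x ≠ 0) : 0 < Q x := by
  have h₂ : x 2 = -x 1 := by unfold timeCoord at h; linarith
  have hQ : Q x = x 0 ^ 2 + 4 * x 1 ^ 2 := by simp only [Q, B, Fin.sum_univ_three, h₂]; ring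
  rw [hQ]
  by_contra hle
  have h₀ : x 0 = 0 := by nlinarith [sq_nonneg (x 0), sq_nonneg (x 1)]
  have h₁ : x 1 = 0 := by nlinarith [sq_nonneg (x 0), sq_nonneg (x 1)]
  exact hx (by funext i; fin_cases i <;> simp [h₀, h₁, h₂])

lemma timeCoord_ne_zero {u : V} (hu : u ≠ 0) (hQ : Q u ≤ 0) : timeCoord u ≠ 0 :=
  fun h => (Q_pos_of_timeCoord_eq_zero h hu).not_ge hQ

lemma sq_timeCoord_mul_Q_add_pos {u x : V} (h : B u x = 0)
    (hne : timeCoord u • x ≠ timeCoord x • u) :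
    0 < timeCoord u ^ 2 * Q x + timeCoord x ^ 2 * Q u := by
  have hy := Q_pos_of_timeCoord_eq_zero
    (by rw [timeCoord_smul_sub_smul]; ring) (sub_ne_zero.mpr hne)
  rwa [Q_smul_sub_smul, B_comm, h, mul_zero, sub_zero] at hy

def ofMinkowski (a b c : ℝ) : V := ![a + c, (b + c) / 2, (c - b) / 2]

lemma exists_eq_ofMinkowski (x : V) : ∃ a b c, x = ofMinkowski a b c :=
  ⟨x 0 - x 1 - x 2, x 1 - x 2, x 1 + x 2, by
    funext i; fin_cases i <;> simp [ofMinkowski]⟩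

lemma B_ofMinkowski (a b c a' b' c' : ℝ) :
    B (ofMinkowski a b c) (ofMinkowski a' b' c') = a * a' + b * b' - c * c' := by
  simp [B, ofMinkowski, Fin.sum_univ_three]; ring

/-- With `u = ofMinkowski p q r` and `s = p² + q²`, the vectors with Minkowski coordinates
`w₁ = (-q, p, 0)` and `w₂ = (pr, qr, s)` are an orthogonal basis of `u^⊥` with `Q w₁ = s` and
`Q w₂ = -s (s - r²)`; the witnesses are `c w₁ ± w₂` with `c² = s - r²`. -/
lemma exists_null_pair_of_Q_pos {u : V} (hu : 0 < Q u) :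
    ∃ v v' : V, B u v = 0 ∧ B u v' = 0 ∧ Q v = 0 ∧ Q v' = 0 ∧ B v v' ≠ 0 := by
  obtain ⟨p, q, r, rfl⟩ := exists_eq_ofMinkowski u
  rw [Q, B_ofMinkowski] at hu
  obtain ⟨c, hc⟩ : ∃ c, c ^ 2 = p ^ 2 + q ^ 2 - r ^ 2 := ⟨_, Real.sq_sqrt (by linarith)⟩
  refine ⟨ofMinkowski (p * r - c * q) (q * r + c * p) (p ^ 2 + q ^ 2),
    ofMinkowski (-(p * r) - c * q) (c * p - q * r) (-(p ^ 2 + q ^ 2)), ?_, ?_, ?_, ?_, ?_⟩ <;>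
    simp only [Q, B_ofMinkowski]
  · ring
  · ring
  · linear_combination (p ^ 2 + q ^ 2) * hc
  · linear_combination (p ^ 2 + q ^ 2) * hc
  · have hs : 0 < p ^ 2 + q ^ 2 := by nlinarith [sq_nonneg r]
    have hpos : 0 < 2 * (p ^ 2 + q ^ 2) * (p ^ 2 + q ^ 2 - r ^ 2) :=
      mul_pos (by positivity) (by linarith)
    refine (hpos.trans_eq ?_).ne'
    linear_combination -(p ^ 2 + q ^ 2) * hc

lemma linearIndependent_of_Q_eq_zero_of_B_ne_zero {v v' : V} (hv : Q v = 0) (hv' : Q v' = 0)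
    (h : B v v' ≠ 0) : LinearIndependent ℝ ![v, v'] := by
  rw [LinearIndependent.pair_iff]
  intro a b hab
  have h₁ := congrArg (Bₗ v) hab
  have h₂ := congrArg (Bₗ v') hab
  simp only [map_add, map_smul, Bₗ_apply, smul_eq_mul, map_zero] at h₁ h₂
  rw [← Q, hv] at h₁
  rw [← Q, hv', B_comm] at h₂
  exact ⟨by simpa [h] using h₂, by simpa [h] using h₁⟩

lemma Module.Dual.ker_eq_span_pair {K M : Type*} [Field K] [AddCommGroup M] [Module K M]
    [FiniteDimensional K M] (hM : finrank K M = 3) {f : Dual K M} (hf : f ≠ 0) {v v' : M}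
    (hv : f v = 0) (hv' : f v' = 0) (hind : LinearIndependent K ![v, v']) :
    LinearMap.ker f = Submodule.span K {v, v'} := by
  refine (Submodule.eq_of_le_of_finrank_eq ?_ ?_).symm
  · rw [Submodule.span_le]
    rintro w (rfl | rfl) <;> assumption
  · have h₁ := finrank_ker_add_one_of_ne_zero hf
    have h₂ := finrank_span_eq_card hind
    rw [Matrix.range_cons_cons_empty] at h₂
    rw [h₂, Fintype.card_fin]
    omega

/-- Properties of the orthogonal plane `H_u = {x : ⟨u,x⟩ = 0}` of a nonzero vector `u`. -/
theorem orthogonal_plane_trichotomy (u : V) (hu : u ≠ 0) :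
    (Q u = 0 → ∀ x : V, B u x = 0 → Q x = 0 → ∃ c : ℝ, x = c • u) ∧
    (0 < Q u → ∃ v v' : V, LinearIndependent ℝ ![v, v'] ∧ Q v = 0 ∧ Q v' = 0 ∧
      {x : V | B u x = 0} = (Submodule.span ℝ {v, v'} : Set V)) ∧
    (Q u < 0 → ∀ x : V, B u x = 0 → x ≠ 0 → 0 < Q x) := by
  refine ⟨fun hQ x hux hx => ?_, fun hQ => ?_, fun hQ x hux hx => ?_⟩
  · have hr := timeCoord_ne_zero hu hQ.le
    have hy : timeCoord u • x = timeCoord x • u := by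
      by_contra hne
      simpa [hQ, hx] using sq_timeCoord_mul_Q_add_pos hux hne
    exact ⟨timeCoord x / timeCoord u, by rw [div_eq_inv_mul, mul_smul, ← hy, inv_smul_smul₀ hr]⟩
  · obtain ⟨v, v', hv, hv', hQv, hQv', hvv'⟩ := exists_null_pair_of_Q_pos hQ
    have hind := linearIndependent_of_Q_eq_zero_of_B_ne_zero hQv hQv' hvv'
    have hBu : Bₗ u ≠ 0 := fun h => hQ.ne' (by simpa [Q] using LinearMap.congr_fun h u)
    refine ⟨v, v', hind, hQv, hQv', ?_⟩
    rw [← Module.Dual.ker_eq_span_pair (by simp) hBu hv hv' hind]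
    ext; simp
  · have hr := timeCoord_ne_zero hu hQ.le
    by_cases hy : timeCoord u • x = timeCoord x • u
    · have hz : timeCoord x = 0 := by
        have h := congrArg (Bₗ u) hy
        simp only [map_smul, Bₗ_apply, hux, smul_eq_mul, mul_zero] at h
        rw [← Q] at h
        exact (mul_eq_zero.mp h.symm).resolve_right hQ.ne
      rw [hz, zero_smul, smul_eq_zero] at hy
      exact absurd (hy.resolve_left hr) hx
    · have := sq_timeCoord_mul_Q_add_pos hux hy
      nlinarith [sq_nonneg (timeCoord x), sq_pos_of_ne_zero hr]
end
end

section
/- Let U₃ be the rank-3 universal Coxeter group with generating set S = {s₁, s₂, s₃}, and for J ⊆ S let U_J denote the subgroup generated by J. If J and J' are nonempty proper subsets of S and w, v ∈ U₃ satisfy w U_J w⁻¹ = v U_{J'} v⁻¹, then J = J' and w U_J = v U_{J'}. Consequently, each nontrivial parabolic subgroup of U₃ stabilizes (under left multiplication) a unique parabolic coset. -/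
open scoped Pointwise

/-- The relations `sᵢ² = 1` defining the rank-3 universal Coxeter group. -/
def U3Rels : Set (FreeGroup (Fin 3)) := {r | ∃ i : Fin 3, r = FreeGroup.of i * FreeGroup.of i}

/-- The rank-3 universal Coxeter group `U₃ = ⟨s₁,s₂,s₃ ∣ s₁² = s₂² = s₃² = 1⟩`. -/
abbrev U3 : Type := PresentedGroup U3Rels

/-- The Coxeter generators of `U₃`. -/
def s (i : Fin 3) : U3 := PresentedGroup.of i

/-- The standard parabolic subgroup `U_J` generated by `{sᵢ : i ∈ J}`. -/
def UJ (J : Set (Fin 3)) : Subgroup U3 := Subgroup.closure (s '' J)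

/-!
Every element of `U₃` has a unique reduced word (no two equal adjacent letters), obtained by
letting `U₃` act on reduced words, the generator `sᵢ` prepending `i` or cancelling a leading `i`.
Then `w ∈ U_J` exactly when all letters of its reduced word lie in `J`. The mod-2 letter counts
are conjugation invariant, so `w U_J w⁻¹ = v U_{J'} v⁻¹` forces `J = J'`. If `j ∈ J` and
`u sⱼ u⁻¹ ∈ U_J` then `u ∈ U_J`: otherwise write `u = a c` with `c ∈ U_J` and the reduced word of
`a` ending in a letter `k ∉ J`; the reduced word of `u sⱼ u⁻¹` is that of `a`, then that of
`c sⱼ c⁻¹ ≠ 1`, then that of `a⁻¹`, with no cancellation, so it contains `k`. Applied to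
`u = w⁻¹ v` this gives `w U_J = v U_J`.
-/

namespace List

variable {α : Type*} [DecidableEq α]

def cancelCons (a : α) : List α → List α
  | [] => [a]
  | b :: t => if b = a then t else a :: b :: t

theorem mem_of_mem_cancelCons {a x : α} {l : List α} (h : x ∈ l.cancelCons a) :
    x = a ∨ x ∈ l := by
  cases l with
  | nil => exact Or.inl (mem_singleton.1 h)
  | cons b t =>
    rw [cancelCons] at h
    split_ifs at h <;> simp_all

theorem IsChain.cancelCons (a : α) {l : List α} (h : l.IsChain (· ≠ ·)) :
    (l.cancelCons a).IsChain (· ≠ ·) := by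
  cases l with
  | nil => simp [List.cancelCons]
  | cons b t =>
    rw [List.cancelCons]
    split_ifs with hba
    · exact h.tail
    · exact h.cons_cons (Ne.symm hba)

theorem cancelCons_cancelCons (a : α) {l : List α} (h : l.IsChain (· ≠ ·)) :
    (l.cancelCons a).cancelCons a = l := by
  match l, h with
  | [], _ => simp [cancelCons]
  | [b], _ => by_cases hba : b = a <;> simp [cancelCons, hba]
  | b :: c :: t, h =>
    have hcb : c ≠ b := (isChain_cons_cons.1 h).1.symm
    by_cases hba : b = a
    · subst hba; simp [cancelCons, hcb]
    · simp [cancelCons, hba]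

end List

namespace U3

abbrev ReducedWord : Type := {l : List (Fin 3) // l.IsChain (· ≠ ·)}

def cancelConsReduced (i : Fin 3) (l : ReducedWord) : ReducedWord :=
  ⟨l.1.cancelCons i, l.2.cancelCons i⟩

theorem cancelConsReduced_involutive (i : Fin 3) : (cancelConsReduced i).Involutive :=
  fun l => Subtype.ext (List.cancelCons_cancelCons i l.2)

def generatorPerm (i : Fin 3) : Equiv.Perm ReducedWord :=
  (cancelConsReduced_involutive i).toPerm

def wordAction : U3 →* Equiv.Perm ReducedWord :=
  PresentedGroup.toGroup (f := generatorPerm) <| by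
    rintro _ ⟨i, rfl⟩
    ext l : 1
    exact cancelConsReduced_involutive i l

def nf (w : U3) : List (Fin 3) := (wordAction w ⟨[], List.isChain_nil⟩).1

theorem isChain_nf (w : U3) : (nf w).IsChain (· ≠ ·) := (wordAction w _).2

@[simp]
theorem nf_one : nf 1 = [] := rfl

theorem nf_s_mul (i : Fin 3) (w : U3) : nf (s i * w) = (nf w).cancelCons i := by
  have hs : wordAction (s i) = generatorPerm i := PresentedGroup.toGroup.of _
  simp only [nf, map_mul, Equiv.Perm.mul_apply, hs]
  rfl

@[simp]
theorem nf_s (i : Fin 3) : nf (s i) = [i] := by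
  simpa [List.cancelCons] using nf_s_mul i 1

theorem s_ne_one (i : Fin 3) : s i ≠ 1 := fun h => by
  simpa using congrArg nf h

@[simp]
theorem s_mul_self (i : Fin 3) : s i * s i = 1 :=
  (QuotientGroup.eq_one_iff _).2 (Subgroup.subset_normalClosure ⟨i, rfl⟩)

@[simp]
theorem s_inv (i : Fin 3) : (s i)⁻¹ = s i :=
  inv_eq_of_mul_eq_one_right (s_mul_self i)

theorem UJ_induction_left {J : Set (Fin 3)} {p : U3 → Prop} (one : p 1)
    (s_mul : ∀ j ∈ J, ∀ y, p y → p (s j * y)) {w : U3} (hw : w ∈ UJ J) : p w := by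
  refine Subgroup.closure_induction_left (p := fun w _ => p w) one ?_ ?_ hw
  · rintro _ ⟨j, hj, rfl⟩ y _
    exact s_mul j hj y
  · rintro _ ⟨j, hj, rfl⟩ y _
    rw [s_inv]
    exact s_mul j hj y

theorem UJ_univ : UJ Set.univ = ⊤ := by
  rw [UJ, Set.image_univ]
  exact PresentedGroup.closure_range_of U3Rels

theorem prod_cancelCons (i : Fin 3) (l : List (Fin 3)) :
    ((l.cancelCons i).map s).prod = s i * (l.map s).prod := by
  cases l with
  | nil => simp [List.cancelCons]
  | cons b t =>
    rw [List.cancelCons]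
    split_ifs with hbi
    · simp [hbi, ← mul_assoc]
    · simp

theorem prod_nf (w : U3) : ((nf w).map s).prod = w :=
  UJ_induction_left (J := Set.univ) (p := fun w => ((nf w).map s).prod = w) rfl
    (fun i _ y hy => by rw [nf_s_mul, prod_cancelCons, hy]) (UJ_univ ▸ Subgroup.mem_top w)

theorem nf_prod {l : List (Fin 3)} (hl : l.IsChain (· ≠ ·)) : nf (l.map s).prod = l := by
  induction l with
  | nil => rfl
  | cons i t ih =>
    rw [List.map_cons, List.prod_cons, nf_s_mul, ih hl.tail]
    cases t with
    | nil => rfl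
    | cons b t => simp [List.cancelCons, (List.isChain_cons_cons.1 hl).1.symm]

theorem nf_mul_of_isChain {x y : U3} (h : (nf x ++ nf y).IsChain (· ≠ ·)) :
    nf (x * y) = nf x ++ nf y := by
  rw [← nf_prod h, List.map_append, List.prod_append, prod_nf, prod_nf]

theorem nf_inv (w : U3) : nf w⁻¹ = (nf w).reverse := by
  have hw : w⁻¹ = ((nf w).reverse.map s).prod := by
    conv_lhs => rw [← prod_nf w]
    simp [List.prod_inv_reverse, Function.comp_def]
  rw [hw, nf_prod (List.isChain_reverse.2 ((isChain_nf w).imp fun _ _ h => h.symm))]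

theorem mem_UJ_iff {J : Set (Fin 3)} {w : U3} : w ∈ UJ J ↔ ∀ a ∈ nf w, a ∈ J := by
  refine ⟨fun hw => UJ_induction_left (p := fun w => ∀ a ∈ nf w, a ∈ J) (by simp) ?_ hw,
    fun hw => ?_⟩
  · intro j hj y hy a ha
    rw [nf_s_mul] at ha
    rcases List.mem_of_mem_cancelCons ha with rfl | ha
    exacts [hj, hy a ha]
  · rw [← prod_nf w]
    refine Subgroup.list_prod_mem _ fun x hx => ?_
    obtain ⟨a, ha, rfl⟩ := List.mem_map.1 hx
    exact Subgroup.subset_closure ⟨a, hw a ha, rfl⟩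

theorem exists_eq_mul_getLast_notMem {J : Set (Fin 3)} {u : U3} (hu : u ∉ UJ J) :
    ∃ a c, u = a * c ∧ c ∈ UJ J ∧ ∃ k ∉ J, (nf a).getLast? = some k := by
  classical
  set p : Fin 3 → Bool := fun i => decide (i ∈ J)
  have hred (l : List (Fin 3)) (hl : l <:+: nf u) : nf (l.map s).prod = l :=
    nf_prod ((isChain_nf u).infix hl)
  have hdrop : (nf u).rdropWhile p ≠ [] := fun h =>
    hu (mem_UJ_iff.2 fun a ha => by simpa [p] using List.rdropWhile_eq_nil_iff.1 h a ha)
  refine ⟨((nf u).rdropWhile p |>.map s).prod, ((nf u).rtakeWhile p |>.map s).prod, ?_, ?_,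
    ((nf u).rdropWhile p).getLast hdrop, ?_, ?_⟩
  · rw [← List.prod_append, ← List.map_append, List.rdropWhile_append_rtakeWhile, prod_nf]
  · refine mem_UJ_iff.2 fun a ha => ?_
    rw [hred _ (List.rtakeWhile_suffix p _).isInfix] at ha
    simpa [p] using List.mem_rtakeWhile_imp ha
  · simpa [p] using List.rdropWhile_last_not p _ hdrop
  · rw [hred _ (List.rdropWhile_prefix p _).isInfix, List.getLast?_eq_some_getLast hdrop]

theorem conj_notMem_UJ {J : Set (Fin 3)} {a d : U3} {k : Fin 3} (hk : k ∉ J)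
    (ha : (nf a).getLast? = some k) (hd : d ∈ UJ J) (hd1 : d ≠ 1) : a * d * a⁻¹ ∉ UJ J := by
  have hdJ := mem_UJ_iff.1 hd
  have hne : nf d ≠ [] := fun h => hd1 (by rw [← prod_nf d, h]; rfl)
  have had : (nf a ++ nf d).IsChain (· ≠ ·) := by
    refine List.isChain_append.2 ⟨isChain_nf a, isChain_nf d, fun x hx y hy => ?_⟩
    rw [ha, Option.mem_some_iff] at hx
    exact hx ▸ (ne_of_mem_of_not_mem (hdJ y (List.mem_of_mem_head? hy)) hk).symm
  have hada : (nf (a * d) ++ nf a⁻¹).IsChain (· ≠ ·) := by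
    refine List.isChain_append.2 ⟨isChain_nf _, isChain_nf _, fun x hx y hy => ?_⟩
    rw [nf_mul_of_isChain had, List.getLast?_append_of_ne_nil _ hne] at hx
    rw [nf_inv, List.head?_reverse, ha, Option.mem_some_iff] at hy
    exact hy ▸ ne_of_mem_of_not_mem (hdJ x (List.mem_of_getLast? hx)) hk
  intro hmem
  refine hk (mem_UJ_iff.1 hmem k ?_)
  rw [nf_mul_of_isChain hada, nf_mul_of_isChain had]
  simp [List.mem_of_getLast? ha]

theorem mem_UJ_of_conj_s_mem_UJ {J : Set (Fin 3)} {j : Fin 3} (hj : j ∈ J) {u : U3}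
    (h : u * s j * u⁻¹ ∈ UJ J) : u ∈ UJ J := by
  by_contra hu
  obtain ⟨a, c, rfl, hc, k, hk, ha⟩ := exists_eq_mul_getLast_notMem hu
  refine conj_notMem_UJ hk ha (d := c * s j * c⁻¹) ?_ ?_ (by simpa only [mul_inv_rev, mul_assoc] using h)
  · exact mul_mem (mul_mem hc (Subgroup.subset_closure ⟨j, hj, rfl⟩)) (inv_mem hc)
  · rw [Ne, mul_inv_eq_one, mul_eq_left]
    exact s_ne_one j

def letterParity (i : Fin 3) : U3 →* Multiplicative (ZMod 2) :=
  PresentedGroup.toGroup (f := fun j => if j = i then Multiplicative.ofAdd 1 else 1) <| by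
    rintro _ ⟨j, rfl⟩
    rw [map_mul, FreeGroup.lift_apply_of]
    split_ifs <;> decide

theorem letterParity_s (i j : Fin 3) :
    letterParity i (s j) = if j = i then Multiplicative.ofAdd 1 else 1 :=
  PresentedGroup.toGroup.of _

theorem UJ_le_ker_letterParity {K : Set (Fin 3)} {i : Fin 3} (hi : i ∉ K) :
    UJ K ≤ (letterParity i).ker := by
  refine (Subgroup.closure_le _).2 ?_
  rintro _ ⟨j, hj, rfl⟩
  simp [letterParity_s, ne_of_mem_of_not_mem hj hi]

theorem mem_of_conj_s_mem_UJ {K : Set (Fin 3)} {x : U3} {j : Fin 3}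
    (h : x * s j * x⁻¹ ∈ UJ K) : j ∈ K := by
  by_contra hj
  have h1 := UJ_le_ker_letterParity hj h
  rw [MonoidHom.mem_ker, map_mul, map_mul, map_inv, mul_right_comm, mul_inv_cancel, one_mul,
    letterParity_s, if_pos rfl] at h1
  exact absurd h1 (by decide)

end U3

theorem Subgroup.conj_mem_of_map_conj_eq {G : Type*} [Group G] {H K : Subgroup G} {w v g : G}
    (h : H.map (MulAut.conj w).toMonoidHom = K.map (MulAut.conj v).toMonoidHom) (hg : g ∈ H) :
    (v⁻¹ * w) * g * (v⁻¹ * w)⁻¹ ∈ K := by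
  obtain ⟨y, hy, hyg⟩ := h ▸ Subgroup.mem_map_of_mem (MulAut.conj w).toMonoidHom hg
  simp only [MulEquiv.coe_toMonoidHom, MulAut.conj_apply] at hyg
  rwa [show (v⁻¹ * w) * g * (v⁻¹ * w)⁻¹ = v⁻¹ * (w * g * w⁻¹) * v by group, ← hyg,
    show v⁻¹ * (v * y * v⁻¹) * v = y by group]

open U3 in
theorem parabolic_subgroup_unique_coset_general (J J' : Set (Fin 3))
    (hJne : J.Nonempty) (w v : U3)
    (h : Subgroup.map (MulAut.conj w).toMonoidHom (UJ J)
        = Subgroup.map (MulAut.conj v).toMonoidHom (UJ J')) :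
    J = J' ∧ w • (UJ J : Set U3) = v • (UJ J' : Set U3) := by
  have hJJ' : J = J' := Set.Subset.antisymm
    (fun j hj => mem_of_conj_s_mem_UJ
      (Subgroup.conj_mem_of_map_conj_eq h (Subgroup.subset_closure ⟨j, hj, rfl⟩)))
    (fun j hj => mem_of_conj_s_mem_UJ
      (Subgroup.conj_mem_of_map_conj_eq h.symm (Subgroup.subset_closure ⟨j, hj, rfl⟩)))
  subst hJJ'
  obtain ⟨j, hj⟩ := hJne
  exact ⟨rfl, (leftCoset_eq_iff _).2 <| mem_UJ_of_conj_s_mem_UJ hj <|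
    Subgroup.conj_mem_of_map_conj_eq h.symm (Subgroup.subset_closure ⟨j, hj, rfl⟩)⟩

/-- If two conjugates `w U_J w⁻¹ = v U_{J'} v⁻¹` of standard parabolic subgroups
(generated by nonempty proper subsets of the generators) coincide, then `J = J'` and
the parabolic cosets `w U_J` and `v U_{J'}` coincide. Consequently, each nontrivial
parabolic subgroup of `U₃` stabilizes a unique parabolic coset. -/
theorem parabolic_subgroup_unique_coset (J J' : Set (Fin 3))
    (hJne : J.Nonempty) (hJpr : J ≠ Set.univ)
    (hJ'ne : J'.Nonempty) (hJ'pr : J' ≠ Set.univ) (w v : U3)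
    (h : Subgroup.map (MulAut.conj w).toMonoidHom (UJ J)
        = Subgroup.map (MulAut.conj v).toMonoidHom (UJ J')) :
    J = J' ∧ w • (UJ J : Set U3) = v • (UJ J' : Set U3) :=
  parabolic_subgroup_unique_coset_general J J' hJne w v h
end

section
/- A point p of the affine plane 𝔸 = {(x,y,z) ∈ V : x + y + z = 1} is an accumulation point of the set of rescaled positive roots {β̂ : β ∈ Φ⁺} if and only if Q(p) = 0. -/
/-!
The positive roots are exactly the nonnegative integer vectors `β` with `Q β = 1`: simple
reflections preserve `Q` and the integer lattice, and conversely such a `β` other than a simple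
root has `B (αᵢ, β) > 0` for some `i` (because `∑ βᵢ B (αᵢ, β) = Q β = 1`), so `r_{αᵢ}` lowers its
height while keeping it nonnegative. Hence `Q (β̂) = height(β)⁻²`: rescaled roots lie in `Q > 0`,
and near a point with `Q > 0` only the finitely many roots of bounded height occur.

Conversely, the isotropic points of `𝔸` are the rescalings of `(m², n², (m + n)²)`. For coprime
integers `m, n` with `m t - n s = 1`, the vectors `(m s', n t', (m + n)(s' + t'))` with
`(s', t') = (s, t) + k (m, n)` are positive roots for large `k`, and their rescalings converge to
that of `(m², n², (m + n)²)`; such rational points are dense in the conic.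
-/

open scoped NNReal

noncomputable section

open Filter Topology

lemma B_alpha (i : Fin 3) (x : V) : B (α i) x = 2 * x i - ∑ j, x j := by
  simp [B, α, Pi.single_apply]

lemma Q_alpha (i : Fin 3) : Q (α i) = 1 := by
  rw [Q, B_alpha]
  simp only [α, Pi.single_eq_same, Finset.sum_pi_single', Finset.mem_univ, ↓reduceIte]
  norm_num

lemma Q_smul (t : ℝ) (x : V) : Q (t • x) = t ^ 2 * Q x := by
  simp only [Q, B, Pi.smul_apply, smul_eq_mul, Fin.sum_univ_three]; ring

lemma Q_sub_smul (x v : V) (t : ℝ) : Q (x - t • v) = Q x - 2 * t * B v x + t ^ 2 * Q v := by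
  simp only [Q, B, Pi.sub_apply, Pi.smul_apply, smul_eq_mul, Fin.sum_univ_three]; ring

lemma sum_mul_B_alpha (x : V) : ∑ i, x i * B (α i) x = Q x := by
  simp_rw [B_alpha]; simp only [Q, B, Fin.sum_univ_three]; ring

def Bform : LinearMap.BilinForm ℝ V :=
  LinearMap.mk₂ ℝ B
    (fun x y z => by simp only [B, Pi.add_apply, add_mul, Finset.sum_add_distrib]; ring)
    (fun c x y => by
      simp only [B, Pi.smul_apply, smul_eq_mul, mul_assoc, ← Finset.mul_sum]; ring)
    (fun x y z => by simp only [B, Pi.add_apply, mul_add, Finset.sum_add_distrib]; ring)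
    (fun c x y => by
      simp only [B, Pi.smul_apply, smul_eq_mul, mul_left_comm _ c, ← Finset.mul_sum]; ring)

def simpleRefl (i : Fin 3) : V ≃ₗ[ℝ] V :=
  Module.reflection (x := α i) (f := 2 • Bform (α i)) <| by
    simpa [Bform, Q] using Q_alpha i

lemma simpleRefl_apply (i : Fin 3) (x : V) :
    simpleRefl i x = x - (2 * B (α i) x) • α i := by
  simp [simpleRefl, Module.reflection_apply, Bform]

lemma simpleRefl_involutive (i : Fin 3) : Function.Involutive (simpleRefl i) :=
  Module.involutive_reflection _

lemma Q_simpleRefl (i : Fin 3) (x : V) : Q (simpleRefl i x) = Q x := by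
  rw [simpleRefl_apply, Q_sub_smul, Q_alpha]; ring

lemma sum_simpleRefl (i : Fin 3) (x : V) :
    ∑ j, simpleRefl i x j = ∑ j, x j - 2 * B (α i) x := by
  simp [simpleRefl_apply, Finset.sum_sub_distrib, α, Pi.single_apply]

lemma simpleRefl_mem_W (i : Fin 3) : simpleRefl i ∈ W :=
  Subgroup.subset_closure ⟨i, simpleRefl_apply i⟩

lemma IsSimpleReflection.exists_eq_simpleRefl {f : V ≃ₗ[ℝ] V} (hf : IsSimpleReflection f) :
    ∃ i, f = simpleRefl i := by
  obtain ⟨i, hi⟩ := hf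
  exact ⟨i, LinearEquiv.ext fun x => by rw [hi, simpleRefl_apply]⟩

lemma pred_apply_iff_of_mem_W {P : V → Prop} (hP : ∀ i x, P x → P (simpleRefl i x))
    {w : V ≃ₗ[ℝ] V} (hw : w ∈ W) (x : V) : P (w x) ↔ P x := by
  induction hw using Subgroup.closure_induction generalizing x with
  | mem f hf =>
    obtain ⟨i, rfl⟩ := hf.exists_eq_simpleRefl
    refine ⟨fun h => ?_, hP i x⟩
    simpa only [simpleRefl_involutive i x] using hP i _ h
  | one => rfl
  | mul a b _ _ ha hb => exact (ha (b x)).trans (hb x)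
  | inv a _ ha => simpa using (ha (a⁻¹ x)).symm

def intLattice : AddSubgroup V := ((Int.castAddHom ℝ).compLeft (Fin 3)).range

lemma mem_intLattice {x : V} : x ∈ intLattice ↔ ∃ z : Fin 3 → ℤ, (fun i => (z i : ℝ)) = x :=
  Iff.rfl

lemma alpha_mem_intLattice (i : Fin 3) : α i ∈ intLattice :=
  ⟨Pi.single i 1, by ext j; simp [α, Pi.single_apply]⟩

lemma B_mem_range_intCast {x y : V} (hx : x ∈ intLattice) (hy : y ∈ intLattice) :
    B x y ∈ Set.range ((↑) : ℤ → ℝ) := by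
  obtain ⟨z, rfl⟩ := hx
  obtain ⟨w, rfl⟩ := hy
  exact ⟨2 * ∑ i, z i * w i - (∑ i, z i) * ∑ i, w i, by simp [B]⟩

lemma simpleRefl_mem_intLattice (i : Fin 3) {x : V} (hx : x ∈ intLattice) :
    simpleRefl i x ∈ intLattice := by
  obtain ⟨b, hb⟩ := B_mem_range_intCast (alpha_mem_intLattice i) hx
  rw [simpleRefl_apply, ← hb, show (2 * (b : ℝ)) = ((2 * b : ℤ) : ℝ) by push_cast; ring,
    Int.cast_smul_eq_zsmul]
  exact sub_mem hx (zsmul_mem (alpha_mem_intLattice i) _)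

lemma mem_intLattice_and_Q_of_mem_Φ {x : V} (hx : x ∈ Φ) : x ∈ intLattice ∧ Q x = 1 := by
  obtain ⟨w, hw, i, rfl⟩ := hx
  refine (pred_apply_iff_of_mem_W (P := fun x => x ∈ intLattice ∧ Q x = 1) ?_ hw (α i)).2
    ⟨alpha_mem_intLattice i, Q_alpha i⟩
  exact fun i x ⟨hL, hQ⟩ => ⟨simpleRefl_mem_intLattice i hL, (Q_simpleRefl i x).trans hQ⟩

lemma mem_nnspan_Δ {x : V} : x ∈ nnspan Δ ↔ 0 ≤ x := by
  have hsum (c : Fin 3 → ℝ≥0) : ∑ i, c i • α i = fun j => (c j : ℝ) := by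
    ext j; simp [α, Pi.single_apply, NNReal.smul_def]
  simp only [nnspan, Δ, SetLike.mem_coe, Submodule.mem_span_range_iff_exists_fun, hsum]
  refine ⟨?_, fun hx => ⟨fun j => ⟨x j, hx j⟩, rfl⟩⟩
  rintro ⟨c, rfl⟩ j
  exact (c j).2

lemma exists_B_alpha_pos {x : V} (hx : 0 ≤ x) (hQ : 0 < Q x) : ∃ i, 0 < B (α i) x := by
  by_contra! h
  have := Finset.sum_nonpos fun i (_ : i ∈ Finset.univ) =>
    mul_nonpos_of_nonneg_of_nonpos (hx i) (h i)
  rw [sum_mul_B_alpha] at this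
  linarith

lemma eq_alpha_of_sum_le_one {x : V} (hL : x ∈ intLattice) (h0 : 0 ≤ x) (hQ : Q x = 1)
    (h1 : ∑ i, x i ≤ 1) : ∃ i, x = α i := by
  obtain ⟨z, rfl⟩ := mem_intLattice.1 hL
  have hz (i : Fin 3) : 0 ≤ z i := by simpa using h0 i
  have hsum : z 0 + z 1 + z 2 ≤ 1 := by
    simp only [Fin.sum_univ_three] at h1; exact_mod_cast h1
  have hne : ¬(z 0 = 0 ∧ z 1 = 0 ∧ z 2 = 0) := fun ⟨h0, h1, h2⟩ => by
    simp [Q, B, Fin.sum_univ_three, h0, h1, h2] at hQ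
  have hcases : z 0 = 1 ∧ z 1 = 0 ∧ z 2 = 0 ∨ z 0 = 0 ∧ z 1 = 1 ∧ z 2 = 0 ∨
      z 0 = 0 ∧ z 1 = 0 ∧ z 2 = 1 := by
    have := hz 0; have := hz 1; have := hz 2
    omega
  rcases hcases with h | h | h
  exacts [⟨0, funext fun i => by fin_cases i <;> simp [h, α]⟩,
    ⟨1, funext fun i => by fin_cases i <;> simp [h, α]⟩,
    ⟨2, funext fun i => by fin_cases i <;> simp [h, α]⟩]

/- The new `i`-th coordinate is `2 ∑ x - 3 xᵢ`. If it were negative, then with `s` the sum of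
the other two coordinates, integrality gives `xᵢ ≥ 2 s + 1`, and
`1 = Q x = (xⱼ - xₖ)² + xᵢ (xᵢ - 2 s) ≥ xᵢ` would force `∑ x = 1`. -/
lemma simpleRefl_nonneg (i : Fin 3) {x : V} (hL : x ∈ intLattice) (h0 : 0 ≤ x) (hQ : Q x = 1)
    (h1 : 1 < ∑ j, x j) : 0 ≤ simpleRefl i x := by
  intro j
  rw [simpleRefl_apply]
  by_cases hji : j = i
  swap
  · simpa [α, hji] using h0 j
  subst hji
  obtain ⟨z, rfl⟩ := mem_intLattice.1 hL
  have hz (i : Fin 3) : 0 ≤ z i := by simpa using h0 i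
  have hsum : 1 < z 0 + z 1 + z 2 := by
    simp only [Fin.sum_univ_three] at h1; exact_mod_cast h1
  have hQz :
      2 * (z 0 * z 0 + z 1 * z 1 + z 2 * z 2) - (z 0 + z 1 + z 2) * (z 0 + z 1 + z 2) = 1 := by
    simp only [Q, B, Fin.sum_univ_three] at hQ; exact_mod_cast hQ
  suffices h : 0 ≤ 2 * (z 0 + z 1 + z 2) - 3 * z j by
    have h' : (0 : ℝ) ≤ ((2 * (z 0 + z 1 + z 2) - 3 * z j : ℤ) : ℝ) := by exact_mod_cast h
    push_cast at h'
    simp only [B_alpha, Fin.sum_univ_three, Pi.zero_apply, Pi.sub_apply, Pi.smul_apply,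
      smul_eq_mul]
    simp only [α, Pi.single_eq_same, mul_one]
    linarith
  have := hz 0; have := hz 1; have := hz 2
  fin_cases j <;> simp only [Fin.isValue, Fin.zero_eta, Fin.mk_one, Fin.reduceFinMk] <;>
    nlinarith [sq_nonneg (z 1 - z 2), sq_nonneg (z 0 - z 2), sq_nonneg (z 0 - z 1)]

lemma one_le_B_of_pos {x y : V} (hx : x ∈ intLattice) (hy : y ∈ intLattice) (h : 0 < B x y) :
    1 ≤ B x y := by
  obtain ⟨b, hb⟩ := B_mem_range_intCast hx hy
  rw [← hb] at h ⊢
  exact_mod_cast (Int.cast_pos.1 h : 0 < b)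

lemma simpleRefl_mem_Φ (i : Fin 3) {x : V} (hx : x ∈ Φ) : simpleRefl i x ∈ Φ := by
  obtain ⟨w, hw, j, rfl⟩ := hx
  exact ⟨simpleRefl i * w, mul_mem (simpleRefl_mem_W i) hw, j, rfl⟩

lemma alpha_mem_Φ (i : Fin 3) : α i ∈ Φ := ⟨1, one_mem W, i, rfl⟩

lemma mem_Φ_of_nonneg {x : V} (hL : x ∈ intLattice) (h0 : 0 ≤ x) (hQ : Q x = 1) : x ∈ Φ := by
  obtain ⟨n, hn⟩ : ∃ n : ℕ, ∑ i, x i ≤ n := ⟨_, Nat.le_ceil _⟩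
  induction n generalizing x with
  | zero =>
    obtain ⟨i, rfl⟩ := eq_alpha_of_sum_le_one hL h0 hQ (hn.trans (by norm_num))
    exact alpha_mem_Φ i
  | succ n ih =>
    by_cases h1 : ∑ i, x i ≤ 1
    · obtain ⟨i, rfl⟩ := eq_alpha_of_sum_le_one hL h0 hQ h1
      exact alpha_mem_Φ i
    obtain ⟨i, hi⟩ := exists_B_alpha_pos h0 (by rw [hQ]; exact one_pos)
    have hdrop := one_le_B_of_pos (alpha_mem_intLattice i) hL hi
    have hy := ih (simpleRefl_mem_intLattice i hL) (simpleRefl_nonneg i hL h0 hQ (by linarith))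
      ((Q_simpleRefl i x).trans hQ) (by rw [sum_simpleRefl]; push_cast at hn; linarith)
    simpa only [simpleRefl_involutive i x] using simpleRefl_mem_Φ i hy

theorem mem_Φpos_iff {x : V} : x ∈ Φpos ↔ x ∈ intLattice ∧ 0 ≤ x ∧ Q x = 1 := by
  refine ⟨fun ⟨hΦ, hspan⟩ => ?_, fun ⟨hL, h0, hQ⟩ => ⟨?_, mem_nnspan_Δ.2 h0⟩⟩
  · obtain ⟨hL, hQ⟩ := mem_intLattice_and_Q_of_mem_Φ hΦ
    exact ⟨hL, mem_nnspan_Δ.1 hspan, hQ⟩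
  · exact mem_Φ_of_nonneg hL h0 hQ

def rescale (x : V) : V := (∑ i, x i)⁻¹ • x

def rescaledRoots : Set V := {x | ∃ β ∈ Φpos, x = rescale β}

lemma continuous_Q : Continuous Q := by
  unfold Q B; fun_prop

lemma Q_rescale (x : V) : Q (rescale x) = ((∑ i, x i) ^ 2)⁻¹ * Q x := by
  rw [rescale, Q_smul, inv_pow]

lemma Q_le_sq_sum {x : V} (h0 : 0 ≤ x) : Q x ≤ (∑ i, x i) ^ 2 := by
  have := h0 0; have := h0 1; have := h0 2
  simp only [Q, B, Fin.sum_univ_three]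
  nlinarith [mul_nonneg (h0 0) (h0 1), mul_nonneg (h0 0) (h0 2), mul_nonneg (h0 1) (h0 2)]

lemma one_le_sum_of_mem_Φpos {β : V} (hβ : β ∈ Φpos) : 1 ≤ ∑ i, β i := by
  obtain ⟨-, h0, hQ⟩ := mem_Φpos_iff.1 hβ
  have := Q_le_sq_sum h0
  nlinarith [Finset.sum_nonneg fun i (_ : i ∈ Finset.univ) => h0 i]

lemma Q_pos_of_mem_rescaledRoots {y : V} (hy : y ∈ rescaledRoots) : 0 < Q y := by
  obtain ⟨β, hβ, rfl⟩ := hy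
  rw [Q_rescale, (mem_Φpos_iff.1 hβ).2.2, mul_one]
  have := one_le_sum_of_mem_Φpos hβ
  positivity

lemma finite_Φpos_sum_le (N : ℝ) : {β ∈ Φpos | ∑ i, β i ≤ N}.Finite := by
  refine ((Set.finite_Icc (0 : Fin 3 → ℤ) fun _ => ⌊N⌋).image
    fun z i => (z i : ℝ)).subset ?_
  rintro β ⟨hβ, hN⟩
  obtain ⟨hL, h0, -⟩ := mem_Φpos_iff.1 hβ
  obtain ⟨z, rfl⟩ := mem_intLattice.1 hL
  refine ⟨z, ⟨fun i => by simpa using h0 i, fun i => Int.le_floor.2 ?_⟩, rfl⟩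
  exact (Finset.single_le_sum (fun j _ => h0 j) (Finset.mem_univ i)).trans hN

theorem Q_eq_zero_of_accPt {p : V} (h : AccPt p (𝓟 rescaledRoots)) : Q p = 0 := by
  have hp : 0 ≤ Q p :=
    (isClosed_le continuous_const continuous_Q).closure_subset_iff.2
      (fun y hy => (Q_pos_of_mem_rescaledRoots hy).le)
      (mem_closure_iff_clusterPt.2 h.clusterPt)
  refine hp.antisymm' (not_lt.1 fun hpos => ?_)
  have hU : {y | Q p / 2 < Q y} ∈ 𝓝 p :=
    (isOpen_lt continuous_const continuous_Q).mem_nhds (by show Q p / 2 < Q p; linarith)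
  refine Set.Infinite.of_accPt (h.nhds_inter hU) ((finite_Φpos_sum_le (2 / Q p)).image
    rescale |>.subset ?_)
  rintro _ ⟨hQ, β, hβ, rfl⟩
  refine ⟨β, ⟨hβ, ?_⟩, rfl⟩
  have h1 := one_le_sum_of_mem_Φpos hβ
  change Q p / 2 < Q (rescale β) at hQ
  rw [Q_rescale, (mem_Φpos_iff.1 hβ).2.2, mul_one] at hQ
  have hsq := (lt_inv_comm₀ (by positivity) (by positivity)).1 hQ
  rw [inv_div] at hsq
  exact (le_self_pow₀ h1 two_ne_zero).trans hsq.le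

def conePoint (m n : ℝ) : V := ![m ^ 2, n ^ 2, (m + n) ^ 2]

/- The polarization of `conePoint`:
`conePoint (m + λ s) (n + λ t) = conePoint m n + 2 λ conePolar m n s t + λ² conePoint s t`.
Since `Q` vanishes on `conePoint`, comparing coefficients of `λ` and `λ²` shows that
`conePolar m n s t` is `B`-orthogonal to `conePoint m n` and has norm `(m t - n s)²`. -/
def conePolar (m n s t : ℝ) : V := ![m * s, n * t, (m + n) * (s + t)]

lemma Q_conePolar (m n s t : ℝ) : Q (conePolar m n s t) = (m * t - n * s) ^ 2 := by
  simp only [Q, B, conePolar, Fin.sum_univ_three, Fin.isValue, Matrix.cons_val_zero,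
    Matrix.cons_val_one, Matrix.cons_val]
  ring

lemma conePolar_add_mul (m n s t k : ℝ) :
    conePolar m n (s + k * m) (t + k * n) = k • conePoint m n + conePolar m n s t := by
  ext i
  fin_cases i <;>
    simp only [conePolar, conePoint, Fin.zero_eta, Fin.mk_one, Fin.reduceFinMk, Fin.isValue,
      Matrix.cons_val_zero, Matrix.cons_val_one, Matrix.cons_val, Matrix.smul_cons, smul_eq_mul,
      Matrix.smul_empty, Pi.add_apply] <;>
    ring

lemma conePoint_mul (c m n : ℝ) : conePoint (m * c) (n * c) = c ^ 2 • conePoint m n := by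
  ext i
  fin_cases i <;>
    simp only [conePoint, Fin.zero_eta, Fin.mk_one, Fin.reduceFinMk, Fin.isValue,
      Matrix.cons_val_zero, Matrix.cons_val_one, Matrix.cons_val, Pi.smul_apply, smul_eq_mul] <;>
    ring

lemma sum_conePoint_ne_zero {m n : ℝ} (h : m ≠ 0 ∨ n ≠ 0) : ∑ i, conePoint m n i ≠ 0 := by
  simp only [conePoint, Fin.sum_univ_three, Fin.isValue, Matrix.cons_val_zero,
    Matrix.cons_val_one, Matrix.cons_val, ne_eq]
  rcases h with h | h <;> positivity

lemma continuous_conePoint : Continuous fun x : ℝ × ℝ => conePoint x.1 x.2 := by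
  unfold conePoint; fun_prop

lemma conePolar_mem_Φpos {m n s t : ℤ} (hdet : m * t - n * s = 1) (hs : 0 ≤ m * s)
    (ht : 0 ≤ n * t) (hst : 0 ≤ (m + n) * (s + t)) : conePolar m n s t ∈ Φpos := by
  have hcast : (fun i => ((![m * s, n * t, (m + n) * (s + t)] i : ℤ) : ℝ)) =
      conePolar m n s t := by
    ext i; fin_cases i <;> simp [conePolar]
  refine mem_Φpos_iff.2 ⟨⟨_, hcast⟩, ?_, ?_⟩
  · rw [← hcast]; intro i; fin_cases i <;> exact Int.cast_nonneg ‹_›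
  · rw [Q_conePolar]; exact_mod_cast (by rw [hdet]; norm_num : (m * t - n * s) ^ 2 = 1)

lemma mul_add_mul_nonneg (a : ℤ) {b k : ℤ} (hk : |b| ≤ k) : 0 ≤ a * (b + k * a) := by
  rcases eq_or_ne a 0 with rfl | ha
  · simp
  have hab : -(a * b) ≤ |b| * |a| := by rw [mul_comm, ← abs_mul]; exact neg_le_abs _
  have hkaa : |b| * |a| ≤ k * (a * a) := by
    rw [← abs_mul_abs_self a]
    nlinarith [mul_le_mul_of_nonneg_left (Int.one_le_abs ha)
      (mul_nonneg (abs_nonneg b) (abs_nonneg a)),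
      mul_le_mul_of_nonneg_right hk (mul_nonneg (abs_nonneg a) (abs_nonneg a))]
  linarith [show a * (b + k * a) = a * b + k * (a * a) by ring]

lemma rescale_smul {c : ℝ} (hc : c ≠ 0) (x : V) : rescale (c • x) = rescale x := by
  simp only [rescale, Pi.smul_apply, smul_eq_mul, ← Finset.mul_sum, smul_smul, mul_inv]
  rw [mul_comm c⁻¹, inv_mul_cancel_right₀ hc]

lemma continuousAt_rescale {x : V} (hx : ∑ i, x i ≠ 0) : ContinuousAt rescale x :=
  ((continuous_finsetSum _ fun i _ => continuous_apply i).continuousAt.inv₀ hx).smul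
    continuousAt_id

lemma tendsto_rescale_smul_add {c : V} (hc : ∑ i, c i ≠ 0) (e : V) :
    Tendsto (fun k : ℕ => rescale ((k : ℝ) • c + e)) atTop (𝓝 (rescale c)) := by
  have hlim : Tendsto (fun k : ℕ => c + (k : ℝ)⁻¹ • e) atTop (𝓝 c) := by
    simpa using tendsto_const_nhds.add ((tendsto_inv_atTop_nhds_zero_nat (𝕜 := ℝ)).smul_const e)
  refine ((continuousAt_rescale hc).tendsto.comp hlim).congr' ?_
  filter_upwards [eventually_ne_atTop 0] with k hk
  have hk' : (k : ℝ) ≠ 0 := Nat.cast_ne_zero.2 hk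
  rw [Function.comp_apply, ← rescale_smul hk', smul_add, smul_smul, mul_inv_cancel₀ hk', one_smul]

lemma rescale_conePoint_intCast_mem_closure_of_isCoprime {m n : ℤ} (h : IsCoprime m n) :
    rescale (conePoint m n) ∈ closure rescaledRoots := by
  obtain ⟨u, v, huv⟩ := h
  have hmn : (m : ℝ) ≠ 0 ∨ (n : ℝ) ≠ 0 := by
    by_contra! h0
    simp only [Int.cast_eq_zero] at h0
    simp [h0] at huv
  refine mem_closure_of_tendsto (tendsto_rescale_smul_add (sum_conePoint_ne_zero hmn)
    (conePolar m n (-v) u)) (eventually_atTop.2 ⟨(|u| + |v|).toNat, fun k hk => ?_⟩)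
  have hk : |u| + |v| ≤ k := Int.toNat_le.1 hk
  refine ⟨_, conePolar_mem_Φpos (s := -v + k * m) (t := u + k * n) (by linear_combination huv)
    (mul_add_mul_nonneg m ?_) (mul_add_mul_nonneg n ?_) ?_, ?_⟩
  · rw [abs_neg]; linarith [abs_nonneg u]
  · linarith [abs_nonneg v]
  · rw [show -v + k * m + (u + k * n) = -v + u + k * (m + n) by ring]
    exact mul_add_mul_nonneg _ (by linarith [abs_add_le (-v) u, abs_neg v])
  · push_cast; rw [conePolar_add_mul]

lemma rescale_conePoint_intCast_mem_closure {m n : ℤ} (h : m ≠ 0 ∨ n ≠ 0) :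
    rescale (conePoint m n) ∈ closure rescaledRoots := by
  obtain ⟨g, m, n, hg, hcop, rfl, rfl⟩ := Int.exists_gcd_one' (Int.gcd_pos_iff.2 h)
  push_cast
  rw [conePoint_mul, rescale_smul (by positivity)]
  exact rescale_conePoint_intCast_mem_closure_of_isCoprime (Int.isCoprime_iff_gcd_eq_one.2 hcop)

lemma tendsto_floor_mul_div (x : ℝ) :
    Tendsto (fun N : ℕ => (⌊N * x⌋ : ℝ) / N) atTop (𝓝 x) := by
  have hlow : Tendsto (fun N : ℕ => x - (N : ℝ)⁻¹) atTop (𝓝 x) := by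
    simpa using tendsto_const_nhds.sub (tendsto_inv_atTop_nhds_zero_nat (𝕜 := ℝ))
  refine tendsto_of_tendsto_of_tendsto_of_le_of_le' hlow tendsto_const_nhds ?_ ?_ <;>
    filter_upwards [eventually_gt_atTop 0] with N hN <;>
    have hN' : (0 : ℝ) < N := Nat.cast_pos.2 hN
  · rw [le_div_iff₀ hN', sub_mul, inv_mul_cancel₀ hN'.ne', mul_comm]
    exact (Int.sub_one_lt_floor _).le
  · rw [div_le_iff₀ hN', mul_comm]
    exact Int.floor_le _

lemma rescale_conePoint_mem_closure {x y : ℝ} (h : x ≠ 0 ∨ y ≠ 0) :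
    rescale (conePoint x y) ∈ closure rescaledRoots := by
  have hx := tendsto_floor_mul_div x
  have hy := tendsto_floor_mul_div y
  have hlim := (continuousAt_rescale (sum_conePoint_ne_zero h)).tendsto.comp
    ((continuous_conePoint.tendsto (x, y)).comp (hx.prodMk_nhds hy))
  refine isClosed_closure.mem_of_tendsto hlim ?_
  have hne : ∀ᶠ N : ℕ in atTop, ⌊N * x⌋ ≠ 0 ∨ ⌊N * y⌋ ≠ 0 := by
    rcases h with h | h
    · exact (hx.eventually_ne h).mono fun N hN => Or.inl fun h0 => hN (by simp [h0])
    · exact (hy.eventually_ne h).mono fun N hN => Or.inr fun h0 => hN (by simp [h0])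
  filter_upwards [hne, eventually_ne_atTop 0] with N hN hN0
  have hN' : ((N : ℝ)⁻¹) ≠ 0 := inv_ne_zero (Nat.cast_ne_zero.2 hN0)
  simp only [Function.comp_apply, div_eq_mul_inv]
  rw [conePoint_mul, rescale_smul (pow_ne_zero 2 hN')]
  exact rescale_conePoint_intCast_mem_closure hN

lemma exists_conePoint_eq {p : V} (hp : ∑ i, p i = 1) (hQ : Q p = 0) :
    ∃ x y, conePoint x y = p := by
  simp only [Q, B, Fin.sum_univ_three] at hp hQ
  have h0 : 0 ≤ p 0 := by nlinarith [sq_nonneg (p 1 - p 2)]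
  have h1 : 0 ≤ p 1 := by nlinarith [sq_nonneg (p 0 - p 2)]
  set d := p 2 - p 0 - p 1
  have hd : 2 * √(p 0) * √(p 1) = |d| := by
    refine (pow_left_inj₀ (by positivity) (abs_nonneg d) two_ne_zero).1 ?_
    rw [sq_abs, mul_pow, mul_pow, Real.sq_sqrt h0, Real.sq_sqrt h1]
    linear_combination -hQ
  have key (y : ℝ) (hy : y ^ 2 = p 1) (hxy : 2 * √(p 0) * y = d) : conePoint √(p 0) y = p := by
    ext i; fin_cases i
    · exact Real.sq_sqrt h0
    · exact hy
    · show (√(p 0) + y) ^ 2 = p 2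
      linear_combination Real.sq_sqrt h0 + hy + hxy
  rcases abs_cases d with ⟨habs, -⟩ | ⟨habs, -⟩
  · exact ⟨_, _, key √(p 1) (Real.sq_sqrt h1) (hd.trans habs)⟩
  · exact ⟨_, _, key (-√(p 1)) (by rw [neg_sq, Real.sq_sqrt h1])
      (by linear_combination -(hd.trans habs))⟩

theorem mem_closure_rescaledRoots_of_Q_eq_zero {p : V} (hp : ∑ i, p i = 1) (hQ : Q p = 0) :
    p ∈ closure rescaledRoots := by
  obtain ⟨x, y, rfl⟩ := exists_conePoint_eq hp hQ
  have hxy : x ≠ 0 ∨ y ≠ 0 := by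
    by_contra! h
    simp [conePoint, h.1, h.2, Fin.sum_univ_three] at hp
  simpa [rescale, hp] using rescale_conePoint_mem_closure hxy

/-- A point of the affine plane `x + y + z = 1` is an accumulation point of the set of
rescaled positive roots `{β/height(β) : β ∈ Φ⁺}` iff it lies on the isotropic cone. -/
theorem accumulation_points_of_rescaled_roots (p : V) (hp : (∑ i, p i) = 1) :
    AccPt p (Filter.principal {x : V | ∃ β ∈ Φpos, x = (∑ i, β i)⁻¹ • β}) ↔ Q p = 0 := by
  change AccPt p (𝓟 rescaledRoots) ↔ Q p = 0
  refine ⟨Q_eq_zero_of_accPt, fun hQ => ?_⟩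
  have hp' : p ∉ rescaledRoots := fun h => (Q_pos_of_mem_rescaledRoots h).ne' hQ
  rw [accPt_principal_iff_clusterPt, Set.sdiff_singleton_eq_self hp', ← mem_closure_iff_clusterPt]
  exact mem_closure_rescaledRoots_of_Q_eq_zero hp hQ
end
end

section
/- Let Φ' be a rank-2 linear subsystem of Φ and let β, γ ∈ Φ'⁺. If β is relatively simple in Φ' and γ is not relatively simple in Φ', then height(β) < height(γ). -/
open scoped NNReal

noncomputable section

/-!
Roots are integer vectors with `Q = 1`; this forces every root to be nonnegative or
nonpositive, of odd height, and `⟨u, v⟩` to be an odd integer for roots `u, v`. Reflecting a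
positive root `s ≠ β` of `Φ'` in a relatively simple root `β` gives again a positive root of `Φ'`
(a negative result would write `β` as a positive combination of two other positive roots), and
when `⟨β, s⟩ ≥ 1` this lowers the height by at least `2 height(β)`.

Induct on `height(γ)`. If `⟨β, γ⟩ ≥ 1`, reflecting gives `height(γ) ≥ 1 + 2 height(β)`.
If `⟨β, γ⟩ ≤ -1`, a nonnegative combination of roots of `Φ'⁺ \ {γ}` equal to `γ` contains a root
`ρ = pβ + qγ` with `p < 0`; then `Q(ρ) = 1` forces `q - p ≤ 1`, so `height(ρ) < height(γ)`.
If `ρ` is not relatively simple, induction applies. Otherwise `γ` is a positive combination of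
the two relatively simple roots `β, ρ`, and the same reflection descent shows that every other
root of `Φ'⁺` has height at least `height(β) + height(ρ)`.
-/

namespace UniversalCoxeter

def height : V →ₗ[ℝ] ℝ where
  toFun x := ∑ i, x i
  map_add' _ _ := Finset.sum_add_distrib
  map_smul' _ _ := (Finset.mul_sum ..).symm

lemma height_apply (x : V) : height x = ∑ i, x i := rfl

lemma B_apply (x y : V) : B x y =
    2 * (x 0 * y 0 + x 1 * y 1 + x 2 * y 2) - (x 0 + x 1 + x 2) * (y 0 + y 1 + y 2) := by
  simp [B, Fin.sum_univ_three]

lemma B_comm (x y : V) : B x y = B y x := by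
  rw [B_apply, B_apply]; ring

lemma B_add_right (x y z : V) : B x (y + z) = B x y + B x z := by
  simp only [B_apply, Pi.add_apply]; ring

lemma B_smul_right (x y : V) (c : ℝ) : B x (c • y) = c * B x y := by
  simp only [B_apply, Pi.smul_apply, smul_eq_mul]; ring

lemma Q_smul_add_smul (u v : V) (a b : ℝ) :
    Q (a • u + b • v) = a ^ 2 * Q u + b ^ 2 * Q v + 2 * a * b * B u v := by
  simp only [Q, B_apply, Pi.add_apply, Pi.smul_apply, smul_eq_mul]; ring

lemma Q_smul (v : V) (c : ℝ) : Q (c • v) = c ^ 2 * Q v := by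
  simpa using Q_smul_add_smul v 0 c 0

lemma B_α_left (i : Fin 3) (x : V) : B (α i) x = 2 * x i - height x := by
  fin_cases i <;> simp [B_apply, α, height_apply, Fin.sum_univ_three]

lemma Q_α (i : Fin 3) : Q (α i) = 1 := by
  rw [Q, B_α_left]; fin_cases i <;> norm_num [α, height_apply, Fin.sum_univ_three]

lemma B_reflect_reflect {a : V} (ha : Q a = 1) (x y : V) :
    B (x - (2 * B a x) • a) (y - (2 * B a y) • a) = B x y := by
  have expand : ∀ c d : ℝ, B (x - c • a) (y - d • a) =
      B x y - c * B a y - d * B x a + c * d * Q a := by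
    intro c d; simp only [Q, B_apply, Pi.sub_apply, Pi.smul_apply, smul_eq_mul]; ring
  rw [expand, ha, B_comm x a]; ring

def twiceB (a : V) : Module.Dual ℝ V where
  toFun y := 2 * B a y
  map_add' y z := by simp only [B_add_right]; ring
  map_smul' c y := by simp only [B_smul_right, smul_eq_mul, RingHom.id_apply]; ring

def simpleReflection (i : Fin 3) : V ≃ₗ[ℝ] V :=
  Module.reflection (show twiceB (α i) (α i) = 2 by simp [twiceB, ← Q_α i, Q])

lemma simpleReflection_apply (i : Fin 3) (x : V) :
    simpleReflection i x = x - (2 * B (α i) x) • α i := rfl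

lemma simpleReflection_mem_W (i : Fin 3) : simpleReflection i ∈ W :=
  Subgroup.subset_closure ⟨i, simpleReflection_apply i⟩

lemma IsSimpleReflection.exists_eq {f : V ≃ₗ[ℝ] V} (hf : IsSimpleReflection f) :
    ∃ i, f = simpleReflection i := by
  obtain ⟨i, hi⟩ := hf
  exact ⟨i, LinearEquiv.ext hi⟩

lemma W_induction {p : (V ≃ₗ[ℝ] V) → Prop} (one : p 1) (mul : ∀ f g, p f → p g → p (f * g))
    (refl : ∀ i, p (simpleReflection i)) {w : V ≃ₗ[ℝ] V} (hw : w ∈ W) : p w := by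
  induction hw using Subgroup.closure_induction'' with
  | mem f hf => obtain ⟨i, rfl⟩ := IsSimpleReflection.exists_eq hf; exact refl i
  | inv_mem f hf => obtain ⟨i, rfl⟩ := IsSimpleReflection.exists_eq hf; exact refl i
  | one => exact one
  | mul _ _ _ _ hf hg => exact mul _ _ hf hg

lemma B_map_of_mem_W {w : V ≃ₗ[ℝ] V} (hw : w ∈ W) (x y : V) : B (w x) (w y) = B x y := by
  revert x y
  exact W_induction (p := fun w => ∀ x y, B (w x) (w y) = B x y) (fun _ _ => rfl)
    (fun _ _ hf hg x y => (hf _ _).trans (hg x y)) (fun i => B_reflect_reflect (Q_α i)) hw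

def intPoints : Set V := Set.range fun z : Fin 3 → ℤ => fun i => (z i : ℝ)

lemma simpleReflection_mem_intPoints (i : Fin 3) {x : V} (hx : x ∈ intPoints) :
    simpleReflection i x ∈ intPoints := by
  obtain ⟨z, rfl⟩ := hx
  refine ⟨fun j => z j - 2 * (2 * z i - ∑ k, z k) * if j = i then 1 else 0, funext fun j => ?_⟩
  simp only [simpleReflection_apply, B_α_left, height_apply]
  by_cases hj : j = i <;> simp [α, hj]

lemma map_mem_intPoints_of_mem_W {w : V ≃ₗ[ℝ] V} (hw : w ∈ W) {x : V} (hx : x ∈ intPoints) :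
    w x ∈ intPoints :=
  W_induction (p := fun w => ∀ x ∈ intPoints, w x ∈ intPoints) (fun _ hx => hx)
    (fun _ _ hf hg x hx => hf _ (hg x hx)) (fun i _ => simpleReflection_mem_intPoints i) hw x hx

lemma Q_of_mem_Φ {v : V} (hv : v ∈ Φ) : Q v = 1 := by
  obtain ⟨w, hw, i, rfl⟩ := hv
  rw [Q, B_map_of_mem_W hw, ← Q, Q_α]

lemma exists_int_of_mem_Φ {v : V} (hv : v ∈ Φ) :
    ∃ a b c : ℤ, v = ![(a : ℝ), b, c] ∧ 2 * (a ^ 2 + b ^ 2 + c ^ 2) - (a + b + c) ^ 2 = 1 := by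
  obtain ⟨z, hz⟩ : v ∈ intPoints := by
    obtain ⟨w, hw, i, rfl⟩ := hv
    refine map_mem_intPoints_of_mem_W hw ⟨Pi.single i 1, funext fun j => ?_⟩
    by_cases hj : j = i <;> simp [α, hj]
  have hv3 : v = ![(z 0 : ℝ), z 1, z 2] := by
    rw [← hz]; funext j; fin_cases j <;> rfl
  refine ⟨z 0, z 1, z 2, hv3, ?_⟩
  have hQ : ((2 * (z 0 ^ 2 + z 1 ^ 2 + z 2 ^ 2) - (z 0 + z 1 + z 2) ^ 2 : ℤ) : ℝ) = Q v := by
    rw [hv3, Q, B_apply]; push_cast; ring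
  exact_mod_cast hQ.trans (Q_of_mem_Φ hv)

/-- Since `2(x² + y² + z²) - (x + y + z)² = (x + y - z)² - 4xy`. -/
lemma mul_nonneg_of_quadratic_eq_one {x y z : ℤ}
    (h : 2 * (x ^ 2 + y ^ 2 + z ^ 2) - (x + y + z) ^ 2 = 1) : 0 ≤ x * y := by
  have : -1 ≤ 4 * (x * y) := by nlinarith [sq_nonneg (x + y - z)]
  omega

lemma odd_of_quadratic_eq_one {x y z : ℤ}
    (h : 2 * (x ^ 2 + y ^ 2 + z ^ 2) - (x + y + z) ^ 2 = 1) : Odd (x + y + z) :=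
  (Int.odd_pow' two_ne_zero).mp ⟨x ^ 2 + y ^ 2 + z ^ 2 - 1, by linear_combination -h⟩

lemma nonneg_or_nonpos_of_forall_mul_nonneg {ι R : Type*} [Ring R] [LinearOrder R]
    [IsStrictOrderedRing R] {z : ι → R} (h : ∀ i j, 0 ≤ z i * z j) : 0 ≤ z ∨ z ≤ 0 := by
  by_contra hz
  simp only [not_or, Pi.le_def, not_forall, not_le, Pi.zero_apply] at hz
  obtain ⟨⟨i, hi⟩, ⟨j, hj⟩⟩ := hz
  exact (h i j).not_gt (mul_neg_of_neg_of_pos hi hj)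

lemma nonneg_or_nonpos_of_mem_Φ {v : V} (hv : v ∈ Φ) : 0 ≤ v ∨ v ≤ 0 := by
  obtain ⟨a, b, c, rfl, h⟩ := exists_int_of_mem_Φ hv
  have hab : (0 : ℝ) ≤ a * b := by exact_mod_cast mul_nonneg_of_quadratic_eq_one h
  have hac : (0 : ℝ) ≤ a * c := by
    exact_mod_cast mul_nonneg_of_quadratic_eq_one (z := b) (by linear_combination h)
  have hbc : (0 : ℝ) ≤ b * c := by
    exact_mod_cast mul_nonneg_of_quadratic_eq_one (z := a) (by linear_combination h)
  refine nonneg_or_nonpos_of_forall_mul_nonneg fun i j => ?_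
  fin_cases i <;> fin_cases j <;>
    simp only [Fin.zero_eta, Fin.mk_one, Fin.reduceFinMk, Fin.isValue, Matrix.cons_val_zero,
      Matrix.cons_val_one, Matrix.cons_val] <;>
    linarith [mul_self_nonneg (a : ℝ), mul_self_nonneg (b : ℝ), mul_self_nonneg (c : ℝ)]

lemma exists_odd_height_of_mem_Φ {v : V} (hv : v ∈ Φ) : ∃ n : ℤ, Odd n ∧ height v = n := by
  obtain ⟨a, b, c, rfl, h⟩ := exists_int_of_mem_Φ hv
  exact ⟨a + b + c, odd_of_quadratic_eq_one h, by simp [height_apply, Fin.sum_univ_three]⟩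

lemma B_le_neg_one_or_one_le {u v : V} (hu : u ∈ Φ) (hv : v ∈ Φ) : B u v ≤ -1 ∨ 1 ≤ B u v := by
  obtain ⟨a, b, c, rfl, h⟩ := exists_int_of_mem_Φ hu
  obtain ⟨d, e, f, rfl, h'⟩ := exists_int_of_mem_Φ hv
  obtain ⟨k, ⟨m, rfl⟩, hB⟩ : ∃ k : ℤ, Odd k ∧ B ![(a : ℝ), b, c] ![(d : ℝ), e, f] = k :=
    ⟨_, (even_two_mul (a * d + b * e + c * f)).sub_odd
      ((odd_of_quadratic_eq_one h).mul (odd_of_quadratic_eq_one h')),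
      by rw [B_apply]; push_cast; simp⟩
  rw [hB]
  exact_mod_cast (by omega : 2 * m + 1 ≤ -1 ∨ 1 ≤ 2 * m + 1)

lemma reflect_mem_Φ {u v : V} (hu : u ∈ Φ) (hv : v ∈ Φ) : u - (2 * B v u) • v ∈ Φ := by
  obtain ⟨w, hw, i, rfl⟩ := hv
  obtain ⟨w', hw', j, rfl⟩ := hu
  refine ⟨w * simpleReflection i * w⁻¹ * w',
    mul_mem (mul_mem (mul_mem hw (simpleReflection_mem_W i)) (inv_mem hw)) hw', j, ?_⟩
  have hB := B_map_of_mem_W hw (α i) (w.symm (w' (α j)))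
  rw [w.apply_symm_apply] at hB
  change _ = w (simpleReflection i (w.symm (w' (α j))))
  rw [simpleReflection_apply, map_sub, map_smul, w.apply_symm_apply, hB]

lemma mem_nnspan_Δ_iff {x : V} : x ∈ nnspan Δ ↔ 0 ≤ x := by
  constructor
  · intro hx
    induction hx using Submodule.span_induction with
    | mem y hy => obtain ⟨i, rfl⟩ := hy; exact Pi.single_nonneg.mpr zero_le_one
    | zero => exact le_rfl
    | add y z _ _ hy hz => exact add_nonneg hy hz
    | smul c y _ hy => exact smul_nonneg c.2 hy
  · intro hx
    rw [← Finset.univ_sum_single x]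
    refine Submodule.sum_mem _ fun i _ => ?_
    have : Pi.single i (x i) = (⟨x i, hx i⟩ : ℝ≥0) • α i := by
      ext j; by_cases hj : j = i <;> simp [α, hj]
    rw [this]
    exact Submodule.smul_mem _ _ (Submodule.subset_span ⟨i, rfl⟩)

lemma mem_Φpos_iff {v : V} : v ∈ Φpos ↔ v ∈ Φ ∧ 0 ≤ v :=
  Iff.and Iff.rfl mem_nnspan_Δ_iff

lemma exists_nat_height_of_mem_Φpos {v : V} (hv : v ∈ Φpos) :
    ∃ n : ℕ, 0 < n ∧ height v = n := by
  obtain ⟨hΦ, hnonneg⟩ := mem_Φpos_iff.mp hv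
  obtain ⟨n, ⟨k, rfl⟩, hn⟩ := exists_odd_height_of_mem_Φ hΦ
  have h0 : (0 : ℝ) ≤ height v := by
    rw [height_apply]; exact Finset.sum_nonneg fun i _ => hnonneg i
  rw [hn] at h0
  have hk : 0 ≤ k := by
    have : (0 : ℤ) ≤ 2 * k + 1 := by exact_mod_cast h0
    omega
  lift k to ℕ using hk
  exact ⟨2 * k + 1, by omega, by rw [hn]; push_cast; ring⟩

lemma one_le_height_of_mem_Φpos {v : V} (hv : v ∈ Φpos) : 1 ≤ height v := by
  obtain ⟨n, hn, hv⟩ := exists_nat_height_of_mem_Φpos hv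
  rw [hv]; exact_mod_cast hn

lemma Φpos_induction_on_height {P : (γ : V) → γ ∈ Φpos → Prop}
    (step : ∀ γ hγ, (∀ ρ hρ, height ρ < height γ → P ρ hρ) → P γ hγ) (γ : V)
    (hγ : γ ∈ Φpos) : P γ hγ := by
  obtain ⟨n, -, hn⟩ := exists_nat_height_of_mem_Φpos hγ
  induction n using Nat.strong_induction_on generalizing γ with
  | _ n ih =>
    refine step γ hγ fun ρ hρ hlt => ?_
    obtain ⟨m, -, hm⟩ := exists_nat_height_of_mem_Φpos hρ
    exact ih m (by rw [hm, hn] at hlt; exact_mod_cast hlt) ρ hρ hm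

lemma eq_of_mem_Φpos_of_eq_smul {u v : V} (hu : u ∈ Φpos) (hv : v ∈ Φpos) {c : ℝ}
    (h : u = c • v) : u = v := by
  have hc2 : 1 = c ^ 2 := by
    simpa [Q_of_mem_Φ hu.1, Q_of_mem_Φ hv.1, Q_smul] using congrArg Q h
  have hheight : height u = c * height v := by rw [h, map_smul, smul_eq_mul]
  have hc : 0 < c := by
    nlinarith [one_le_height_of_mem_Φpos hu, one_le_height_of_mem_Φpos hv]
  obtain rfl : c = 1 := by nlinarith
  rw [h, one_smul]

lemma linearIndependent_of_mem_Φpos {u v : V} (hu : u ∈ Φpos) (hv : v ∈ Φpos) (hne : u ≠ v) :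
    LinearIndependent ℝ ![u, v] := by
  have hu0 : u ≠ 0 := fun h => by
    have := one_le_height_of_mem_Φpos hu
    rw [h, map_zero] at this; norm_num at this
  exact (LinearIndependent.pair_iff' hu0).mpr fun a h =>
    hne (eq_of_mem_Φpos_of_eq_smul hv hu h.symm).symm

lemma exists_eq_smul_add_smul_of_finrank_le_two {H : Submodule ℝ V}
    (hH : Module.finrank ℝ H ≤ 2) {u v : V} (hu : u ∈ H) (hv : v ∈ H)
    (huv : LinearIndependent ℝ ![u, v]) {s : V} (hs : s ∈ H) :
    ∃ a b : ℝ, s = a • u + b • v := by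
  have hle : Submodule.span ℝ (Set.range ![u, v]) ≤ H := by
    rw [Submodule.span_le, Set.range_subset_iff]
    intro i; fin_cases i
    exacts [hu, hv]
  have heq := Submodule.eq_of_le_of_finrank_le hle
    (by rwa [finrank_span_eq_card huv, Fintype.card_fin])
  obtain ⟨c, hc⟩ := (Submodule.mem_span_range_iff_exists_fun ℝ).mp (heq ▸ hs)
  exact ⟨c 0, c 1, by simpa [Fin.sum_univ_two, eq_comm] using hc⟩

lemma smul_add_smul_mem_nnspan {X : Set V} {s t : V} (hs : s ∈ X) (ht : t ∈ X) {a b : ℝ}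
    (ha : 0 ≤ a) (hb : 0 ≤ b) : a • s + b • t ∈ nnspan X :=
  add_mem (Submodule.smul_mem _ (⟨a, ha⟩ : ℝ≥0) (Submodule.subset_span hs))
    (Submodule.smul_mem _ (⟨b, hb⟩ : ℝ≥0) (Submodule.subset_span ht))

lemma eq_zero_of_mem_nnspan {X : Set V} (φ : V →ₗ[ℝ] ℝ) (hX : ∀ x ∈ X, 0 < φ x) {x : V}
    (hx : x ∈ nnspan X) (hφx : φ x ≤ 0) : x = 0 := by
  have key : 0 ≤ φ x ∧ (φ x = 0 → x = 0) := by
    clear hφx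
    induction hx using Submodule.span_induction with
    | mem y hy => exact ⟨(hX y hy).le, fun h => absurd h (hX y hy).ne'⟩
    | zero => simp
    | add y z _ _ hy hz =>
      rw [map_add]
      refine ⟨add_nonneg hy.1 hz.1, fun h => ?_⟩
      rw [hy.2 (by linarith [hy.1, hz.1]), hz.2 (by linarith [hy.1, hz.1]), add_zero]
    | smul c y _ hy =>
      rw [NNReal.smul_def, map_smul, smul_eq_mul]
      refine ⟨mul_nonneg c.2 hy.1, fun h => ?_⟩
      rcases mul_eq_zero.mp h with hc | h
      · simp [NNReal.coe_eq_zero.mp hc]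
      · rw [hy.2 h, smul_zero]
  exact key.2 (hφx.antisymm key.1)

lemma neg_mem_Φ {v : V} (hv : v ∈ Φ) : -v ∈ Φ := by
  have h := reflect_mem_Φ hv hv
  rwa [← Q, Q_of_mem_Φ hv, show v - (2 * 1 : ℝ) • v = -v by module] at h

lemma height_reflect_add_le {s ν : V} (hs : s ∈ Φ) (hν : ν ∈ Φpos) (hB : 0 < B ν s) :
    height (s - (2 * B ν s) • ν) + 2 * height ν ≤ height s := by
  have h1 : 1 ≤ B ν s := (B_le_neg_one_or_one_le hν.1 hs).resolve_left (by linarith)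
  have hν1 := one_le_height_of_mem_Φpos hν
  rw [map_sub, map_smul, smul_eq_mul]
  nlinarith

lemma reflect_ne_of_mem_Φpos {s μ : V} (hs : s ∈ Φpos) (hμ : μ ∈ Φpos) (hsμ : s ≠ μ) :
    s - (2 * B μ s) • μ ≠ μ := fun h =>
  hsμ (eq_of_mem_Φpos_of_eq_smul hs hμ (c := 1 + 2 * B μ s)
    (by linear_combination (norm := module) h))

/-- The positive part `Φ'⁺` of the linear subsystem `Φ' = H ∩ Φ`. -/
def posSubsystem (H : Submodule ℝ V) : Set V := ((H : Set V) ∩ Φ) ∩ Φpos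

def IsRelSimple (H : Submodule ℝ V) (β : V) : Prop :=
  β ∈ posSubsystem H ∧ β ∉ nnspan (posSubsystem H \ {β})

variable {H : Submodule ℝ V}

lemma IsRelSimple.reflect_mem {μ s : V} (hμ : IsRelSimple H μ) (hs : s ∈ posSubsystem H)
    (hsμ : s ≠ μ) : s - (2 * B μ s) • μ ∈ posSubsystem H := by
  set c := B μ s
  set t := s - (2 * c) • μ with ht
  have htΦ : t ∈ Φ := reflect_mem_Φ hs.1.2 hμ.1.1.2
  have htH : t ∈ H := sub_mem hs.1.1 (H.smul_mem _ hμ.1.1.1)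
  suffices 0 ≤ t from ⟨⟨htH, htΦ⟩, mem_Φpos_iff.mpr ⟨htΦ, this⟩⟩
  refine (nonneg_or_nonpos_of_mem_Φ htΦ).resolve_right fun hneg => ?_
  have hs0 := (mem_Φpos_iff.mp hs.2).2
  have hμ0 := (mem_Φpos_iff.mp hμ.1.2).2
  have hc : 0 < c := by
    by_contra! hc
    have ht0 : t = 0 := le_antisymm hneg (sub_nonneg.mpr (le_trans
      (smul_nonpos_of_nonpos_of_nonneg (by linarith) hμ0) hs0))
    have := Q_of_mem_Φ htΦ
    rw [ht0, Q, B_apply] at this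
    norm_num at this
  have hmtΦ := neg_mem_Φ htΦ
  have hmt : -t ∈ posSubsystem H :=
    ⟨⟨neg_mem htH, hmtΦ⟩, mem_Φpos_iff.mpr ⟨hmtΦ, neg_nonneg.mpr hneg⟩⟩
  have hmtμ : -t ≠ μ := fun h =>
    hsμ (eq_of_mem_Φpos_of_eq_smul hs.2 hμ.1.2 (c := 2 * c - 1)
      (by linear_combination (norm := module) -h - ht))
  -- `μ` is a positive combination of `s` and `-t`, contradicting its simplicity.
  have hμeq : μ = (1 / (2 * c)) • s + (1 / (2 * c)) • -t := by
    rw [← smul_add, ht, neg_sub, add_sub_cancel, smul_smul, one_div,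
      inv_mul_cancel₀ (by positivity), one_smul]
  have hmem := smul_add_smul_mem_nnspan (X := posSubsystem H \ {μ}) ⟨hs, hsμ⟩ ⟨hmt, hmtμ⟩
    (a := 1 / (2 * c)) (b := 1 / (2 * c)) (by positivity) (by positivity)
  rw [← hμeq] at hmem
  exact hμ.2 hmem

lemma IsRelSimple.coeff_nonneg {μ ν s : V} (hν : IsRelSimple H ν) (hμ : μ ∈ posSubsystem H)
    (hμν : μ ≠ ν) (hs : s ∈ posSubsystem H) {a b : ℝ} (hab : s = a • μ + b • ν) : 0 ≤ a := by
  by_contra! ha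
  have hb : 0 < b := by
    have hheight : height s = a * height μ + b * height ν := by simp [hab]
    nlinarith [one_le_height_of_mem_Φpos hs.2, one_le_height_of_mem_Φpos hμ.2,
      one_le_height_of_mem_Φpos hν.1.2]
  have hsν : s ≠ ν := by
    rintro rfl
    have h : a • μ = (1 - b) • s := by linear_combination (norm := module) -hab
    exact hμν (eq_of_mem_Φpos_of_eq_smul hμ.2 hs.2 (c := a⁻¹ * (1 - b))
      (by rw [mul_smul, ← h, smul_smul, inv_mul_cancel₀ ha.ne, one_smul]))
  have hνeq : ν = (1 / b) • s + (-a / b) • μ := by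
    rw [hab]; match_scalars <;> field_simp
    ring
  have hmem := smul_add_smul_mem_nnspan (X := posSubsystem H \ {ν}) ⟨hs, hsν⟩ ⟨hμ, hμν⟩
    (a := 1 / b) (b := -a / b) (by positivity) (div_nonneg (by linarith) hb.le)
  rw [← hνeq] at hmem
  exact hν.2 hmem

lemma height_add_height_le_of_isRelSimple (hH : Module.finrank ℝ H ≤ 2) {μ ν s : V}
    (hμ : IsRelSimple H μ) (hν : IsRelSimple H ν) (hμν : μ ≠ ν) (hs : s ∈ posSubsystem H)
    (hsμ : s ≠ μ) (hsν : s ≠ ν) : height μ + height ν ≤ height s := by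
  induction s, hs.2 using Φpos_induction_on_height generalizing μ ν with
  | step s _ ih =>
    obtain ⟨a, b, hab⟩ := exists_eq_smul_add_smul_of_finrank_le_two hH hμ.1.1.1 hν.1.1.1
      (linearIndependent_of_mem_Φpos hμ.1.2 hν.1.2 hμν) hs.1.1
    have ha := hν.coeff_nonneg hμ.1 hμν hs hab
    have hb := hμ.coeff_nonneg hν.1 hμν.symm hs (hab.trans (add_comm _ _))
    have hQ : 1 = a * B μ s + b * B ν s := by
      rw [← Q_of_mem_Φ hs.1.2, Q]
      nth_rewrite 2 [hab]
      rw [B_add_right, B_smul_right, B_smul_right, B_comm s μ, B_comm s ν]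
    wlog hpos : 0 < B ν s generalizing μ ν a b
    · rw [add_comm]
      refine this hν hμ hμν.symm hsν hsμ b a (hab.trans (add_comm _ _)) hb ha (by linarith) ?_
      by_contra! h
      nlinarith [mul_nonneg ha (neg_nonneg.mpr h), mul_nonneg hb (neg_nonneg.mpr (not_lt.mp hpos))]
    have hdesc := height_reflect_add_le hs.1.2 hν.1.2 hpos
    have ht := hν.reflect_mem hs hsν
    by_cases htμ : s - (2 * B ν s) • ν = μ
    · rw [htμ] at hdesc
      linarith [one_le_height_of_mem_Φpos hν.1.2]
    · have := ih _ ht.2 (by linarith [one_le_height_of_mem_Φpos hν.1.2]) hμ hν hμν ht htμ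
        (reflect_ne_of_mem_Φpos hs.2 hν.1.2 hsν)
      linarith [one_le_height_of_mem_Φpos hν.1.2]

lemma exists_height_lt_of_B_le_neg_one (hH : Module.finrank ℝ H ≤ 2) {β γ : V}
    (hβ : β ∈ posSubsystem H) (hγ : γ ∈ posSubsystem H)
    (hγn : γ ∈ nnspan (posSubsystem H \ {γ})) (hB : B β γ ≤ -1) :
    ∃ ρ ∈ posSubsystem H, ρ ≠ β ∧ height ρ < height γ := by
  have hβγ : β ≠ γ := by
    rintro rfl
    linarith [Q_of_mem_Φ hβ.1.2, show Q β = B β β from rfl]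
  have hind := linearIndependent_of_mem_Φpos hβ.2 hγ.2 hβγ
  have hβ_notMem : β ∉ Submodule.span ℝ {γ} := fun h => by
    obtain ⟨c, hc⟩ := Submodule.mem_span_singleton.mp h
    exact hβγ (eq_of_mem_Φpos_of_eq_smul hβ.2 hγ.2 hc.symm)
  obtain ⟨φ₀, hφ₀β, hφ₀γ⟩ := Submodule.exists_le_ker_of_notMem hβ_notMem
  -- `φ` reads off the `β`-coordinate of points of `H`.
  set φ := (φ₀ β)⁻¹ • φ₀
  have hφγ : φ γ = 0 := by
    simp [φ, LinearMap.mem_ker.mp (hφ₀γ (Submodule.mem_span_singleton_self γ))]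
  have hφβ : φ β = 1 := by simp [φ, hφ₀β]
  have hcoord : ∀ x ∈ posSubsystem H, ∃ q : ℝ, x = φ x • β + q • γ := by
    intro x hx
    obtain ⟨p, q, rfl⟩ := exists_eq_smul_add_smul_of_finrank_le_two hH hβ.1.1 hγ.1.1 hind hx.1.1
    exact ⟨q, by simp [hφβ, hφγ]⟩
  obtain ⟨ρ, hρ, hφρ⟩ : ∃ ρ ∈ posSubsystem H, φ ρ < 0 := by
    by_contra! h
    have hpos : ∀ x ∈ posSubsystem H \ {γ}, 0 < φ x := by
      rintro x ⟨hx, hxγ⟩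
      refine (h x hx).lt_of_ne fun h0 => hxγ ?_
      obtain ⟨q, hq⟩ := hcoord x hx
      exact eq_of_mem_Φpos_of_eq_smul hx.2 hγ.2 (by rw [hq, ← h0, zero_smul, zero_add])
    have := one_le_height_of_mem_Φpos hγ.2
    rw [eq_zero_of_mem_nnspan φ hpos hγn hφγ.le, map_zero] at this
    norm_num at this
  obtain ⟨q, hq⟩ := hcoord ρ hρ
  refine ⟨ρ, hρ, fun h => by rw [h, hφβ] at hφρ; linarith, ?_⟩
  set p := φ ρ
  have hQ : 1 = p ^ 2 + q ^ 2 + 2 * p * q * B β γ := by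
    rw [← Q_of_mem_Φ hρ.1.2, hq, Q_smul_add_smul, Q_of_mem_Φ hβ.1.2, Q_of_mem_Φ hγ.1.2]; ring
  have hheight : height ρ = p * height β + q * height γ := by
    rw [hq, map_add, map_smul, map_smul, smul_eq_mul, smul_eq_mul]
  have hρ1 := one_le_height_of_mem_Φpos hρ.2
  have hβ1 := one_le_height_of_mem_Φpos hβ.2
  have hγ1 := one_le_height_of_mem_Φpos hγ.2
  have hq0 : 0 < q := by nlinarith
  -- `1 = Q ρ ≥ p² + q² - 2pq = (q - p)²`, so `q ≤ 1 + p < 1`.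
  have hq1 : q < 1 := by
    nlinarith [mul_nonneg (mul_nonneg (neg_nonneg.mpr hφρ.le) hq0.le)
      (by linarith : (0 : ℝ) ≤ -B β γ - 1)]
  nlinarith

theorem IsRelSimple.height_lt (hH : Module.finrank ℝ H ≤ 2) {β γ : V} (hβ : IsRelSimple H β)
    (hγ : γ ∈ posSubsystem H) (hγn : γ ∈ nnspan (posSubsystem H \ {γ})) :
    height β < height γ := by
  induction γ, hγ.2 using Φpos_induction_on_height with
  | step γ _ ih =>
    have hγβ : γ ≠ β := by
      rintro rfl
      exact hβ.2 hγn
    rcases B_le_neg_one_or_one_le hβ.1.1.2 hγ.1.2 with hB | hB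
    · obtain ⟨ρ, hρ, hρβ, hlt⟩ := exists_height_lt_of_B_le_neg_one hH hβ.1 hγ hγn hB
      by_cases hρn : ρ ∈ nnspan (posSubsystem H \ {ρ})
      · exact (ih ρ hρ.2 hlt hρ hρn).trans hlt
      · have := height_add_height_le_of_isRelSimple hH hβ ⟨hρ, hρn⟩ hρβ.symm hγ hγβ
          (fun h => hlt.ne' (congrArg height h))
        linarith [one_le_height_of_mem_Φpos hρ.2]
    · have := height_reflect_add_le hγ.1.2 hβ.1.2 (by linarith)
      linarith [one_le_height_of_mem_Φpos (hβ.reflect_mem hγ hγβ).2,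
        one_le_height_of_mem_Φpos hβ.1.2]

end UniversalCoxeter

theorem relatively_simple_has_smaller_height_general (H : Submodule ℝ V)
    (h2 : Module.finrank ℝ H = 2)
    (β γ : V)
    (hβ : β ∈ ((H : Set V) ∩ Φ) ∩ Φpos) (hγ : γ ∈ ((H : Set V) ∩ Φ) ∩ Φpos)
    (hβsimple : β ∉ nnspan ((((H : Set V) ∩ Φ) ∩ Φpos) \ {β}))
    (hγnotsimple : γ ∈ nnspan ((((H : Set V) ∩ Φ) ∩ Φpos) \ {γ})) :
    (∑ i, β i) < (∑ i, γ i) :=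
  UniversalCoxeter.IsRelSimple.height_lt h2.le ⟨hβ, hβsimple⟩ hγ hγnotsimple

/-- In a rank-2 linear subsystem, a relatively simple positive root has strictly
smaller height than any non-relatively-simple positive root. -/
theorem relatively_simple_has_smaller_height (H : Submodule ℝ V)
    (h2 : Module.finrank ℝ H = 2)
    (hspan : H = Submodule.span ℝ ((H : Set V) ∩ Φ))
    (β γ : V)
    (hβ : β ∈ ((H : Set V) ∩ Φ) ∩ Φpos) (hγ : γ ∈ ((H : Set V) ∩ Φ) ∩ Φpos)
    (hβsimple : β ∉ nnspan ((((H : Set V) ∩ Φ) ∩ Φpos) \ {β}))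
    (hγnotsimple : γ ∈ nnspan ((((H : Set V) ∩ Φ) ∩ Φpos) \ {γ})) :
    (∑ i, β i) < (∑ i, γ i) :=
  relatively_simple_has_smaller_height_general H h2 β γ hβ hγ hβsimple hγnotsimple
end
end
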